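/- Let 𝒜 be a compact Hausdorff abelian topological group, L ≥ 2, β_0, …, β_{L−1} ∈ 𝒜, 0 ≤ s ≤ L−1, let C ⊆ {0, …, L−1} be nonempty with p = |C|, and let w : ℤ → 𝒜 satisfy: w_{Lm+k−s} = β_k for all m ∈ ℤ and k ∈ C (coincident columns), and w_{Lm+k−s} = w_m β_k for all m ∈ ℤ and k ∉ C. Let χ be a unitary character of 𝒜, and suppose the autocorrelation coefficient η(m) exists for every m ∈ ℤ. Then for every ε > 0 the set of ε-almost periods P_ε = {m ∈ ℤ : |η(0) − η(m)|^{1/2} < ε} is relatively dense in ℤ. -/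

import Mathlib

/-!
Writing `j = L n + k - s` with `0 ≤ k < L` cuts `ℤ` into blocks of length `L`. In the block of `n`,
the correlation term at lag `L m` equals `1` in the `p` coincident columns and equals the
correlation term at lag `m` in position `n` in the other `L - p` columns (the `β_k` cancel
against their conjugates). Averaging over blocks gives `η (L m) = (p + (L - p) η m) / L`, that is
`1 - η (L m) = (1 - p / L) (1 - η m)`. Since `η 0 = 1`, `|η m| ≤ 1` and `p ≥ 1`, this gives
`|η 0 - η (L ^ t m)| ≤ 2 (1 - p / L) ^ t`, so for large `t` every multiple of `L ^ t` is an
`ε`-almost period.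
-/

/-- `AutoCorr χ w m z` says that the autocorrelation coefficient
`η(m) = lim_{N→∞} (1/(2N+1)) Σ_{j=−N}^{N} χ(w_j)·conj(χ(w_{j+m}))`
exists and equals `z`. -/
def AutoCorr {A : Type*} (χ : A → ℂ) (w : ℤ → A) (m : ℤ) (z : ℂ) : Prop :=
  Filter.Tendsto (fun N : ℕ =>
      (∑ j ∈ Finset.Icc (-(N : ℤ)) (N : ℤ),
          χ (w j) * (starRingEnd ℂ) (χ (w (j + m)))) / (2 * (N : ℂ) + 1))
    Filter.atTop (nhds z)

/-- A set `S ⊆ ℤ` is relatively dense if there is `R > 0` such that every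
interval of length `R` in `ℤ` contains a point of `S`. -/
def RelDense (S : Set ℤ) : Prop :=
  ∃ R : ℕ, 0 < R ∧ ∀ a : ℤ, ∃ m ∈ S, a ≤ m ∧ m < a + R

open Finset Filter Topology ComplexConjugate

theorem Finset.sum_range_mul_eq_sum_sum {M : Type*} [AddCommMonoid M] (F : ℕ → M) (K L : ℕ) :
    ∑ i ∈ range (K * L), F i = ∑ n ∈ range K, ∑ k ∈ range L, F (L * n + k) := by
  induction K with
  | zero => simp
  | succ K ih => rw [add_one_mul, sum_range_add, ih, sum_range_succ, mul_comm K]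

theorem Int.sum_Ico_add_mul_eq_sum_sum {M : Type*} [AddCommMonoid M] (F : ℤ → M) (c : ℤ)
    (K L : ℕ) :
    ∑ j ∈ Ico c (c + (K * L : ℕ)), F j =
      ∑ n ∈ Finset.range K, ∑ k ∈ Finset.range L, F (c + L * n + k) := by
  rw [Int.Ico_eq_finset_map, sum_map, add_sub_cancel_left, Int.toNat_natCast,
    sum_range_mul_eq_sum_sum]
  simp [add_assoc]

noncomputable def symmAvg (f : ℤ → ℂ) (N : ℕ) : ℂ :=
  (∑ j ∈ Icc (-(N : ℤ)) N, f j) / (2 * (N : ℂ) + 1)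

theorem Int.card_Icc_neg_self (N : ℕ) : #(Icc (-(N : ℤ)) N) = 2 * N + 1 := by
  rw [Int.card_Icc]; omega

theorem Complex.two_mul_natCast_add_one_ne_zero (N : ℕ) : (2 * (N : ℂ) + 1) ≠ 0 := by
  exact_mod_cast (2 * N).succ_ne_zero

theorem symmAvg_one (N : ℕ) : symmAvg 1 N = 1 := by
  rw [symmAvg, Pi.one_def, sum_const, Int.card_Icc_neg_self, nsmul_one]
  push_cast
  exact div_self (Complex.two_mul_natCast_add_one_ne_zero N)

theorem norm_symmAvg_le_one {f : ℤ → ℂ} (hf : ∀ j, ‖f j‖ ≤ 1) (N : ℕ) : ‖symmAvg f N‖ ≤ 1 := by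
  have hsum : ‖∑ j ∈ Icc (-(N : ℤ)) N, f j‖ ≤ 2 * N + 1 := by
    have := norm_sum_le_of_le (Icc (-(N : ℤ)) N) fun j _ => hf j
    rwa [sum_const, Int.card_Icc_neg_self, nsmul_one, Nat.cast_succ, Nat.cast_mul,
      Nat.cast_two] at this
  rw [symmAvg, norm_div]
  exact div_le_one_of_le₀ (by exact_mod_cast hsum) (norm_nonneg _)

theorem Int.sum_Icc_sum_range_eq_sum_Ico {M : Type*} [AddCommMonoid M] (F : ℤ → M) (L s K : ℕ) :
    ∑ n ∈ Icc (-(K : ℤ)) K, ∑ k ∈ Finset.range L, F (L * n + k - s) =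
      ∑ j ∈ Ico (-(L * K : ℤ) - s) (-(L * K : ℤ) - s + ((2 * K + 1) * L : ℕ)), F j := by
  rw [Int.sum_Ico_add_mul_eq_sum_sum, Int.Icc_eq_finset_map, sum_map,
    show ((K : ℤ) + 1 - -(K : ℤ)).toNat = 2 * K + 1 by omega]
  refine sum_congr rfl fun n _ => sum_congr rfl fun k _ => congrArg F ?_
  simp only [Function.Embedding.trans_apply, Nat.castEmbedding_apply, addLeftEmbedding_apply]
  ring

theorem norm_sum_Icc_sub_sum_blocks_le {f : ℤ → ℂ} (hf : ∀ j, ‖f j‖ ≤ 1) (L s M : ℕ) :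
    ‖∑ j ∈ Icc (-((L * M + L + s : ℕ) : ℤ)) (L * M + L + s : ℕ), f j -
        ∑ n ∈ Icc (-(M : ℤ)) M, ∑ k ∈ Finset.range L, f (L * n + k - s)‖ ≤ L + 2 * s + 1 := by
  rw [Int.sum_Icc_sum_range_eq_sum_Ico]
  set window := Icc (-((L * M + L + s : ℕ) : ℤ)) (L * M + L + s : ℕ)
  set blocks := Ico (-(L * M : ℤ) - s) (-(L * M : ℤ) - s + ((2 * M + 1) * L : ℕ))
  have hsub : blocks ⊆ window := by
    intro j hj
    simp only [blocks, window, mem_Ico, mem_Icc] at hj ⊢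
    push_cast at hj ⊢
    have : (0 : ℤ) ≤ s := s.cast_nonneg
    constructor <;> nlinarith
  have hcard : #(window \ blocks) = L + 2 * s + 1 := by
    rw [card_sdiff_of_subset hsub, Int.card_Icc_neg_self, Int.card_Ico, add_sub_cancel_left,
      Int.toNat_natCast]
    exact Nat.sub_eq_of_eq_add (by ring)
  have := norm_sum_le_of_le (window \ blocks) fun j _ => hf j
  rw [sum_const, hcard, nsmul_one, sum_sdiff_eq_sub hsub] at this
  exact_mod_cast this

theorem tendsto_div_two_mul_add_one_of_norm_le {u : ℕ → ℂ} {B : ℝ} (hu : ∀ M, ‖u M‖ ≤ B)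
    {N : ℕ → ℕ} (hN : ∀ M, M ≤ N M) :
    Tendsto (fun M => u M / (2 * (N M : ℂ) + 1)) atTop (𝓝 0) := by
  have hB : 0 ≤ B := (norm_nonneg _).trans (hu 0)
  refine squeeze_zero_norm (a := fun M : ℕ => B * (1 / ((M : ℝ) + 1))) (fun M => ?_)
    (by simpa using (tendsto_one_div_add_atTop_nhds_zero_nat (𝕜 := ℝ)).const_mul B)
  have hD : ‖2 * (N M : ℂ) + 1‖ = 2 * N M + 1 := by
    exact_mod_cast Complex.norm_natCast (2 * N M + 1)
  have hMN : (M : ℝ) ≤ N M := by exact_mod_cast hN M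
  rw [norm_div, hD, mul_one_div]
  exact div_le_div₀ hB (hu M) (by positivity) (by linarith)

theorem sum_blocks_eq_mul_symmAvg {f g : ℤ → ℂ} {L s : ℕ} {a b : ℂ}
    (hblock : ∀ n, ∑ k ∈ Finset.range L, f (L * n + k - s) = a + b * g n) (M : ℕ) :
    ∑ n ∈ Icc (-(M : ℤ)) M, ∑ k ∈ Finset.range L, f (L * n + k - s) =
      (2 * M + 1) * (a + b * symmAvg g M) := by
  rw [sum_congr rfl fun n _ => hblock n, sum_add_distrib, sum_const, ← mul_sum,
    Int.card_Icc_neg_self, symmAvg, nsmul_eq_mul]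
  field_simp [Complex.two_mul_natCast_add_one_ne_zero M]
  push_cast
  ring

theorem tendsto_symmAvg_of_sum_blocks {f g : ℤ → ℂ} (hf : ∀ j, ‖f j‖ ≤ 1) {L : ℕ} (hL : 0 < L)
    (s : ℕ) {a b z : ℂ} (hblock : ∀ n, ∑ k ∈ Finset.range L, f (L * n + k - s) = a + b * g n)
    (hg : Tendsto (symmAvg g) atTop (𝓝 z)) :
    Tendsto (fun M : ℕ => symmAvg f (L * M + L + s)) atTop (𝓝 ((a + b * z) / L)) := by
  set D : ℕ → ℂ := fun M => 2 * ((L * M + L + s : ℕ) : ℂ) + 1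
  set E : ℕ → ℂ := fun M => ∑ j ∈ Icc (-((L * M + L + s : ℕ) : ℤ)) (L * M + L + s : ℕ), f j -
    ∑ n ∈ Icc (-(M : ℤ)) M, ∑ k ∈ Finset.range L, f (L * n + k - s)
  -- `L (2M + 1) = D M - (L + 2s + 1)`: the blocks fill the window up to a bounded remainder.
  have hdecomp (M : ℕ) : symmAvg f (L * M + L + s) =
      (1 - (L + 2 * s + 1) / D M) / L * (a + b * symmAvg g M) + E M / D M := by
    have hL' : (L : ℂ) ≠ 0 := by exact_mod_cast hL.ne'
    have hwindow : ∑ j ∈ Icc (-((L * M + L + s : ℕ) : ℤ)) (L * M + L + s : ℕ), f j =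
        E M + (2 * M + 1) * (a + b * symmAvg g M) := by
      rw [← sum_blocks_eq_mul_symmAvg hblock, sub_add_cancel]
    have hD : 2 * ((L : ℂ) * M + L + s) + 1 ≠ 0 := by
      exact_mod_cast Complex.two_mul_natCast_add_one_ne_zero (L * M + L + s)
    rw [symmAvg, hwindow]
    simp only [D]
    push_cast
    have hweight : (1 - ((L : ℂ) + 2 * s + 1) / (2 * (L * M + L + s) + 1)) / L =
        (2 * M + 1) / (2 * ((L : ℂ) * M + L + s) + 1) := by
      rw [div_eq_div_iff hL' hD, sub_mul, div_mul_cancel₀ _ hD]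
      ring
    rw [hweight]
    ring
  have hgap := tendsto_div_two_mul_add_one_of_norm_le (u := fun _ => (L + 2 * s + 1 : ℂ))
    (fun _ => le_rfl) (N := fun M => L * M + L + s) (fun M => by nlinarith)
  have hE := tendsto_div_two_mul_add_one_of_norm_le (u := E)
    (fun M => norm_sum_Icc_sub_sum_blocks_le hf L s M) (N := fun M => L * M + L + s)
    (fun M => by nlinarith)
  convert (((tendsto_const_nhds.sub hgap).div_const (L : ℂ)).mul
    (tendsto_const_nhds.add (tendsto_const_nhds.mul hg))).add hE using 1
  · exact funext hdecomp
  · rw [sub_zero, add_zero, div_mul_eq_mul_div, one_mul]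

theorem Finset.card_div_le_one {L : ℕ} (C : Finset (Fin L)) : (#C : ℝ) / L ≤ 1 :=
  div_le_one_of_le₀ (by exact_mod_cast (card_le_univ C).trans_eq (Fintype.card_fin L))
    (Nat.cast_nonneg L)

section Substitution

variable {A : Type*} [MulOneClass A] {χ : A →* ℂ}

noncomputable def corrTerm (χ : A →* ℂ) (w : ℤ → A) (m j : ℤ) : ℂ :=
  χ (w j) * conj (χ (w (j + m)))

variable (hχ : ∀ a, ‖χ a‖ = 1)
include hχ

theorem mul_conj_apply_eq_one (a : A) : χ a * conj (χ a) = 1 := by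
  rw [Complex.mul_conj', hχ, Complex.ofReal_one, one_pow]

theorem norm_corrTerm (w : ℤ → A) (m j : ℤ) : ‖corrTerm χ w m j‖ = 1 := by
  rw [corrTerm, norm_mul, Complex.norm_conj, hχ, hχ, one_mul]

theorem corrTerm_zero (w : ℤ → A) : corrTerm χ w 0 = 1 := by
  ext j
  rw [corrTerm, add_zero, mul_conj_apply_eq_one hχ, Pi.one_apply]

theorem autoCorr_zero_eq_one {w : ℤ → A} {z : ℂ} (hz : AutoCorr χ w 0 z) : z = 1 := by
  refine tendsto_nhds_unique hz ?_
  change Tendsto (symmAvg (corrTerm χ w 0)) atTop (𝓝 1)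
  rw [corrTerm_zero hχ, funext symmAvg_one]
  exact tendsto_const_nhds

theorem norm_le_one_of_autoCorr {w : ℤ → A} {m : ℤ} {z : ℂ} (hz : AutoCorr χ w m z) : ‖z‖ ≤ 1 :=
  le_of_tendsto' hz.norm (norm_symmAvg_le_one fun j => (norm_corrTerm hχ w m j).le)

variable {L : ℕ} {β : Fin L → A} {s : ℕ} {C : Finset (Fin L)} {w : ℤ → A}
  (hwC : ∀ (m : ℤ) (k : Fin L), k ∈ C → w ((L : ℤ) * m + (k : ℤ) - (s : ℤ)) = β k)
  (hwT : ∀ (m : ℤ) (k : Fin L), k ∉ C → w ((L : ℤ) * m + (k : ℤ) - (s : ℤ)) = w m * β k)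
include hwC hwT

theorem sum_range_corrTerm_block (m n : ℤ) :
    ∑ k ∈ Finset.range L, corrTerm χ w (L * m) (L * n + k - s) =
      #C + ((L : ℂ) - #C) * corrTerm χ w m n := by
  have hshift (k : Fin L) : (L * n + (k : ℤ) - s) + L * m = L * (n + m) + k - s := by ring
  have hcoinc : ∀ k ∈ C, corrTerm χ w (L * m) (L * n + k - s) = 1 := fun k hk => by
    rw [corrTerm, hshift, hwC n k hk, hwC (n + m) k hk, mul_conj_apply_eq_one hχ]
  have htransl : ∀ k ∈ Cᶜ, corrTerm χ w (L * m) (L * n + k - s) = corrTerm χ w m n :=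
    fun k hk => by
      rw [mem_compl] at hk
      rw [corrTerm, hshift, hwT n k hk, hwT (n + m) k hk, map_mul, map_mul, map_mul,
        mul_mul_mul_comm, mul_conj_apply_eq_one hχ, mul_one, corrTerm]
  rw [← Fin.sum_univ_eq_sum_range (fun k => corrTerm χ w (L * m) (L * n + k - s)),
    ← sum_add_sum_compl C, sum_congr rfl hcoinc, sum_congr rfl htransl, sum_const, sum_const,
    card_compl, Fintype.card_fin, nsmul_one, nsmul_eq_mul,
    Nat.cast_sub (by simpa using C.card_le_univ)]

-- Since `η (L m)` is known to exist, it suffices to identify its limit along the subsequence of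
-- windows `L M + L + s` that contain whole blocks.
theorem autoCorr_mul_eq (hL : 0 < L) {m : ℤ} {z z' : ℂ} (hz : AutoCorr χ w m z)
    (hz' : AutoCorr χ w (L * m) z') : z' = (#C + ((L : ℂ) - #C) * z) / L :=
  tendsto_nhds_unique
    (hz'.comp (tendsto_atTop_mono
      (fun M => le_add_right (le_add_right (Nat.le_mul_of_pos_left M hL))) tendsto_id))
    (tendsto_symmAvg_of_sum_blocks (fun j => (norm_corrTerm hχ w _ j).le) hL s
      (sum_range_corrTerm_block hχ hwC hwT m) hz)

theorem norm_one_sub_autoCorr_mul (hL : 0 < L) {m : ℤ} {z z' : ℂ} (hz : AutoCorr χ w m z)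
    (hz' : AutoCorr χ w (L * m) z') : ‖1 - z'‖ = (1 - #C / L) * ‖1 - z‖ := by
  have hL' : (L : ℂ) ≠ 0 := by exact_mod_cast hL.ne'
  have h : 1 - z' = ((1 - #C / L : ℝ) : ℂ) * (1 - z) := by
    rw [autoCorr_mul_eq hχ hwC hwT hL hz hz']
    push_cast
    field_simp
    ring
  rw [h, norm_mul, Complex.norm_real, Real.norm_of_nonneg (sub_nonneg.mpr C.card_div_le_one)]

end Substitution

theorem le_pow_mul_of_le_mul {u : ℤ → ℝ} {L : ℤ} {r B : ℝ} (hr : 0 ≤ r) (hB : ∀ m, u m ≤ B)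
    (hu : ∀ m, u (L * m) ≤ r * u m) (t : ℕ) (m : ℤ) : u (L ^ t * m) ≤ r ^ t * B := by
  induction t generalizing m with
  | zero => simpa using hB m
  | succ t ih =>
    calc u (L ^ (t + 1) * m) = u (L * (L ^ t * m)) := by ring_nf
      _ ≤ r * u (L ^ t * m) := hu _
      _ ≤ r * (r ^ t * B) := mul_le_mul_of_nonneg_left (ih m) hr
      _ = r ^ (t + 1) * B := by ring

theorem relDense_of_forall_mul_mem {S : Set ℤ} {b : ℕ} (hb : 0 < b)
    (h : ∀ n : ℤ, (b : ℤ) * n ∈ S) : RelDense S := by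
  refine ⟨b, hb, fun a => ⟨b * -((-a) / b), h _, ?_⟩⟩
  have hdiv := Int.mul_ediv_add_emod (-a) b
  have hlo := Int.emod_nonneg (-a) (Int.natCast_ne_zero.mpr hb.ne')
  have hhi := Int.emod_lt_of_pos (-a) (Int.natCast_pos.mpr hb)
  constructor <;> linarith

theorem coincidence_relatively_dense_almost_periods_general {A : Type*} [CommGroup A]
    (L : ℕ) (β : Fin L → A) (s : ℕ)
    (C : Finset (Fin L)) (hC : C.Nonempty)
    (w : ℤ → A)
    (hwC : ∀ (m : ℤ) (k : Fin L), k ∈ C →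
      w ((L : ℤ) * m + (k : ℤ) - (s : ℤ)) = β k)
    (hwT : ∀ (m : ℤ) (k : Fin L), k ∉ C →
      w ((L : ℤ) * m + (k : ℤ) - (s : ℤ)) = w m * β k)
    (χ : A →* ℂ)
    (hχunit : ∀ a : A, ‖χ a‖ = 1)
    (η : ℤ → ℂ) (hη : ∀ m : ℤ, AutoCorr χ w m (η m)) :
    ∀ ε : ℝ, 0 < ε →
      RelDense {m : ℤ | Real.sqrt ‖η 0 - η m‖ < ε} := by
  intro ε hε
  have hL : 0 < L := hC.choose.pos
  have hr1 : 1 - (#C : ℝ) / L < 1 :=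
    sub_lt_self 1 (div_pos (by exact_mod_cast hC.card_pos) (by exact_mod_cast hL))
  have hcontract (m : ℤ) : ‖1 - η (L * m)‖ ≤ (1 - #C / L) * ‖1 - η m‖ :=
    (norm_one_sub_autoCorr_mul hχunit hwC hwT hL (hη m) (hη (L * m))).le
  have hbound (m : ℤ) : ‖1 - η m‖ ≤ 2 := calc
    ‖1 - η m‖ ≤ ‖(1 : ℂ)‖ + ‖η m‖ := norm_sub_le _ _
    _ ≤ 2 := by linarith [norm_one (α := ℂ), norm_le_one_of_autoCorr hχunit (hη m)]
  have hr0 : 0 ≤ 1 - (#C : ℝ) / L := sub_nonneg.mpr C.card_div_le_one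
  obtain ⟨t, ht⟩ := exists_pow_lt_of_lt_one (by positivity : 0 < ε ^ 2 / 2) hr1
  refine relDense_of_forall_mul_mem (pow_pos hL t) fun n => ?_
  rw [Set.mem_ofPred_eq, autoCorr_zero_eq_one hχunit (hη 0), Real.sqrt_lt' hε]
  push_cast
  linarith [le_pow_mul_of_le_mul hr0 hbound hcontract t n]

/-- For a pseudo-fixed point `w` of a constant-length-`L`
substitution on a compact Hausdorff abelian group whose columns at positions
`k ∈ C` (with `C ≠ ∅`) are the coincidences `θ ↦ β_k` and whose other columns
are the translations `θ ↦ θβ_k`, weighted by a unitary character `χ`: if all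
autocorrelation coefficients `η(m)` exist, then for every `ε > 0` the set of
`ε`-almost periods `P_ε = {m : |η(0) − η(m)|^{1/2} < ε}` is relatively dense
in `ℤ`. -/
theorem coincidence_relatively_dense_almost_periods {A : Type*}
    [TopologicalSpace A] [CompactSpace A] [T2Space A] [CommGroup A]
    [IsTopologicalGroup A]
    (L : ℕ) (hL : 2 ≤ L) (β : Fin L → A) (s : ℕ) (hs : s ≤ L - 1)
    (C : Finset (Fin L)) (hC : C.Nonempty)
    (w : ℤ → A)
    (hwC : ∀ (m : ℤ) (k : Fin L), k ∈ C →
      w ((L : ℤ) * m + (k : ℤ) - (s : ℤ)) = β k)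
    (hwT : ∀ (m : ℤ) (k : Fin L), k ∉ C →
      w ((L : ℤ) * m + (k : ℤ) - (s : ℤ)) = w m * β k)
    (χ : A →* ℂ) (hχcont : Continuous χ)
    (hχunit : ∀ a : A, ‖χ a‖ = 1)
    (η : ℤ → ℂ) (hη : ∀ m : ℤ, AutoCorr χ w m (η m)) :
    ∀ ε : ℝ, 0 < ε →
      RelDense {m : ℤ | Real.sqrt ‖η 0 - η m‖ < ε} :=
  coincidence_relatively_dense_almost_periods_general L β s C hC w hwC hwT χ hχunit η hη
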